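/- Let p_i < p_j < p_k. Then along the half-line {(x_{ij}(y), y) : y > y_{ijk}} the phase θ_k strictly dominates θ_i; along {(x_{jk}(y), y) : y > y_{ijk}} the phase θ_i strictly dominates θ_k; and along {(x_{ik}(y), y) : y < y_{ijk}} the phase θ_j strictly dominates θ_i. In particular these three half-lines are non-visible. -/

import Mathlib

noncomputable def phase (pm cm x y : ℝ) : ℝ := pm * x + pm ^ 2 * y + cm

noncomputable def xline (pa pb ca cb y : ℝ) : ℝ := -(pa + pb) * y - (ca - cb) / (pa - pb)

noncomputable def c3s (pi pj pk ci cj ck : ℝ) : ℝ :=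
  ci / ((pi - pj) * (pi - pk)) + cj / ((pj - pk) * (pj - pi)) + ck / ((pk - pi) * (pk - pj))

noncomputable def ycrit (pi pj pk ci cj ck : ℝ) : ℝ := -c3s pi pj pk ci cj ck

/-!
On the line `x = x_{ab}(y)` the phases `θ_a` and `θ_b` agree, and the difference `θ_m - θ_a`
is affine in `y` with slope `(p_m - p_a)(p_m - p_b)`, vanishing exactly at `y_{abm}`, where all
three phases meet. The sign of the slope is read off from the ordering `p_i < p_j < p_k`.
-/

theorem xline_comm (pa pb ca cb y : ℝ) : xline pb pa cb ca y = xline pa pb ca cb y := by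
  unfold xline
  rw [add_comm pb, ← neg_sub pa, ← neg_sub ca, neg_div_neg_eq]

theorem c3s_swap_left (pi pj pk ci cj ck : ℝ) :
    c3s pj pi pk cj ci ck = c3s pi pj pk ci cj ck := by
  unfold c3s
  ring

theorem c3s_swap_right (pi pj pk ci cj ck : ℝ) :
    c3s pi pk pj ci ck cj = c3s pi pj pk ci cj ck := by
  unfold c3s
  ring

theorem phase_sub_phase_xline {pa pb pm : ℝ} (ca cb cm y : ℝ) (hab : pa ≠ pb) (hma : pm ≠ pa)
    (hmb : pm ≠ pb) :
    phase pm cm (xline pa pb ca cb y) y - phase pa ca (xline pa pb ca cb y) y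
      = (pm - pa) * (pm - pb) * (y + c3s pa pb pm ca cb cm) := by
  unfold phase xline c3s
  field_simp [sub_ne_zero.2 hab, sub_ne_zero.2 hma, sub_ne_zero.2 hmb]
  ring

/-- Non-visibility of three half-lines: along x = x_{ij}(y), y > y_{ijk}, θ_k dominates θ_i;
along x = x_{jk}(y), y > y_{ijk}, θ_i dominates θ_k;
along x = x_{ik}(y), y < y_{ijk}, θ_j dominates θ_i. -/
theorem nonvisible_halflines (pi pj pk ci cj ck : ℝ) (hij : pi < pj) (hjk : pj < pk) :
    (∀ y, y > ycrit pi pj pk ci cj ck →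
      phase pk ck (xline pi pj ci cj y) y > phase pi ci (xline pi pj ci cj y) y) ∧
    (∀ y, y > ycrit pi pj pk ci cj ck →
      phase pi ci (xline pj pk cj ck y) y > phase pk ck (xline pj pk cj ck y) y) ∧
    (∀ y, y < ycrit pi pj pk ci cj ck →
      phase pj cj (xline pi pk ci ck y) y > phase pi ci (xline pi pk ci ck y) y) := by
  have hik : pi < pk := hij.trans hjk
  unfold ycrit
  refine ⟨fun y hy => ?_, fun y hy => ?_, fun y hy => ?_⟩
  · have hdiff := phase_sub_phase_xline ci cj ck y hij.ne hik.ne' hjk.ne'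
    have hslope : 0 < (pk - pi) * (pk - pj) := mul_pos (sub_pos.2 hik) (sub_pos.2 hjk)
    nlinarith
  · have hdiff := phase_sub_phase_xline ck cj ci y hjk.ne' hik.ne hij.ne
    rw [xline_comm, ← c3s_swap_left, c3s_swap_right, c3s_swap_left] at hdiff
    have hslope : 0 < (pi - pk) * (pi - pj) :=
      mul_pos_of_neg_of_neg (sub_neg.2 hik) (sub_neg.2 hij)
    nlinarith
  · have hdiff := phase_sub_phase_xline ci ck cj y hik.ne hij.ne' hjk.ne
    rw [c3s_swap_right] at hdiff
    have hslope : (pj - pi) * (pj - pk) < 0 :=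
      mul_neg_of_pos_of_neg (sub_pos.2 hij) (sub_neg.2 hjk)
    nlinarith
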